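/- arXiv:2405.17133 — 2 statements merged into one kernel-verified Lean document; each statement's English description precedes it below -/
import Mathlib

section
/- Let p be an odd prime, f ≥ 1, q = p^f, ξ = q−1. Let ℓ ∈ {0,…,q−2} with base-p digits m_i (extended f-periodically), and let (a_i)_{i∈ℤ} be an f-periodic family with a_i ∈ {1,…,p}, not all equal to p, such that ℓ ≡ −Σ_{i=0}^{f−1} a_i p^i (mod ξ). Then: (a) for every 0 ≤ i < f one has a_i = σ^ℓ(i+1)·p − σ^ℓ(i) − m_i; (b) E(ℓ) = {0 ≤ i < f : there is an integer j < i with a_j = p and a_s = p−1 for all j < s < i}; (c) for every i ∈ ℤ one has i_D^ℓ(i) = Π(min({j < i : a_j = p and a_s = p−1 for all j < s < i} ∪ {i})). -/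
open scoped Classical

/-- The base-`p` digit of `ℓ` at position `j`, extended `f`-periodically to all `j : ℤ`. -/
noncomputable def dig (p f ℓ : ℕ) (j : ℤ) : ℕ := ℓ / p ^ (j % (f : ℤ)).toNat % p

/-- `Π(j) ∈ E(ℓ)` (digits extended `f`-periodically). -/
def Eprop (p f ℓ : ℕ) (j : ℤ) : Prop :=
  ∃ r : ℤ, r < j ∧ dig p f ℓ r = p - 1 ∧ ∀ s : ℤ, r < s → s < j → dig p f ℓ s = p - 2

/-- `σ^ℓ(j) = 1` if `Π(j) ∈ D(ℓ)` and `= 2` if `Π(j) ∈ E(ℓ)`. -/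
noncomputable def sigma (p f ℓ : ℕ) (j : ℤ) : ℕ := if Eprop p f ℓ j then 2 else 1

/-- The length of the maximal run of digits `p-1` immediately preceding position `i'`. -/
noncomputable def run (p f ℓ : ℕ) (i' : ℤ) : ℕ :=
  (Finset.range (f + 1)).sup fun n =>
    if (∀ j : ℕ, j < n → dig p f ℓ (i' - 1 - (j : ℤ)) = p - 1) then n else 0

/-- `i''`, the unique integer `≤ i'` with `m_{i''-1} ≠ p-1` and `m_j = p-1` for
`i'' ≤ j < i'`. -/
noncomputable def istart (p f ℓ : ℕ) (i' : ℤ) : ℤ := i' - run p f ℓ i'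

/-- The map `i_D^ℓ : ℤ → ℤ/fℤ`. -/
noncomputable def iD (p f ℓ : ℕ) (i' : ℤ) : ZMod f :=
  if Eprop p f ℓ (istart p f ℓ i') then ((istart p f ℓ i' - 1 : ℤ) : ZMod f)
  else ((istart p f ℓ i' : ℤ) : ZMod f)

namespace Stmt8Aux

variable {p f ℓ : ℕ}

lemma dig_lt (hp : 0 < p) (j : ℤ) : dig p f ℓ j < p := Nat.mod_lt _ hp

lemma dig_add (j : ℤ) : dig p f ℓ (j + f) = dig p f ℓ j := by
  unfold dig
  have h : (j + (f : ℤ)) % f = j % f := by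
    simpa using Int.add_mul_emod_self_left (a := j) (b := (f : ℤ)) (c := 1)
  rw [h]

lemma dig_sub (j : ℤ) : dig p f ℓ (j - f) = dig p f ℓ j := by
  have := dig_add (p := p) (f := f) (ℓ := ℓ) (j - f)
  simp only [sub_add_cancel] at this
  exact this.symm

lemma Eprop_add (j : ℤ) : Eprop p f ℓ (j + f) ↔ Eprop p f ℓ j := by
  constructor
  · rintro ⟨r, hr, hd, hs⟩
    refine ⟨r - f, by omega, by rwa [dig_sub], fun s h1 h2 => ?_⟩
    have := hs (s + f) (by omega) (by omega)
    rwa [dig_add] at this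
  · rintro ⟨r, hr, hd, hs⟩
    refine ⟨r + f, by omega, by rwa [dig_add], fun s h1 h2 => ?_⟩
    have := hs (s - f) (by omega) (by omega)
    rwa [dig_sub] at this

lemma sigma_add (j : ℤ) : sigma p f ℓ (j + f) = sigma p f ℓ j := by
  unfold sigma
  exact if_congr (Eprop_add j) rfl rfl

lemma per_all {P : ℤ → Prop} (hf : 0 < f) (hP : ∀ s : ℤ, P (s + f) ↔ P s) (i0 : ℤ)
    (h : ∀ s : ℤ, i0 ≤ s → s < i0 + f → P s) (s : ℤ) : P s := by
  have hshift : ∀ (k : ℤ) (t : ℤ), P (t + f * k) ↔ P t := by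
    intro k
    induction k using Int.induction_on with
    | zero => simp
    | succ k ih =>
      intro t
      rw [show t + (f : ℤ) * (k + 1) = (t + f * k) + f by ring, hP, ih]
    | pred k ih =>
      intro t
      rw [show t + (f : ℤ) * (-k - 1) = (t + f * (-k)) - f by ring]
      rw [show (t + (f : ℤ) * (-k)) - f = ((t - f) + f * (-k)) by ring, ih, ← hP]
      rw [show t - (f : ℤ) + f = t by ring]
  have hf' : (0 : ℤ) < f := by exact_mod_cast hf
  set q : ℤ := (s - i0) / f with hq
  have hmod : (f : ℤ) * q + (s - i0) % f = s - i0 := Int.mul_ediv_add_emod _ _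
  have h1 : 0 ≤ (s - i0) % f := Int.emod_nonneg _ (by omega)
  have h2 : (s - i0) % f < f := Int.emod_lt_of_pos _ hf'
  have hfq : (f : ℤ) * -q = -((f : ℤ) * q) := by ring
  have := h (s + f * (-q)) (by rw [hfq]; omega) (by rw [hfq]; omega)
  rwa [hshift] at this

lemma sum_dig_mod (p ℓ : ℕ) : ∀ n : ℕ, (∑ i ∈ Finset.range n, ℓ / p ^ i % p * p ^ i) = ℓ % p ^ n := by
  intro n
  induction n with
  | zero => simp [Nat.mod_one]
  | succ n ih =>
    rw [Finset.sum_range_succ, ih, Nat.mod_pow_succ]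
    ring

lemma dig_nat (i : ℕ) (h : i < f) : dig p f ℓ (i : ℤ) = ℓ / p ^ i % p := by
  unfold dig
  rw [Int.emod_eq_of_lt (by positivity) (by exact_mod_cast h)]
  simp

lemma uniq (hp : 0 < p) : ∀ (n : ℕ) (c d : ℕ → ℕ), (∀ i, i < n → 1 ≤ c i ∧ c i ≤ p) →
    (∀ i, i < n → 1 ≤ d i ∧ d i ≤ p) →
    (∑ i ∈ Finset.range n, c i * p ^ i) = (∑ i ∈ Finset.range n, d i * p ^ i) →
    ∀ i, i < n → c i = d i := by
  intro n
  induction n with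
  | zero => intro c d _ _ _ i hi; omega
  | succ n ih =>
    intro c d hc hd heq i hi
    have e : ∀ e : ℕ → ℕ, (∑ i ∈ Finset.range (n+1), e i * p ^ i)
        = (∑ i ∈ Finset.range n, e (i+1) * p ^ i) * p + e 0 := by
      intro e
      rw [Finset.sum_range_succ']
      simp only [pow_succ, ← mul_assoc, pow_zero, mul_one, Finset.sum_mul]
    rw [e c, e d] at heq
    set X := ∑ i ∈ Finset.range n, c (i+1) * p ^ i with hX
    set Y := ∑ i ∈ Finset.range n, d (i+1) * p ^ i with hY
    have hc0 := hc 0 (by omega)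
    have hd0 := hd 0 (by omega)
    have hXY : X = Y := by
      rcases lt_trichotomy X Y with h | h | h
      · have h2 : (X + 1) * p ≤ Y * p := Nat.mul_le_mul_right p (by omega)
        rw [add_mul, one_mul] at h2
        omega
      · exact h
      · have h2 : (Y + 1) * p ≤ X * p := Nat.mul_le_mul_right p (by omega)
        rw [add_mul, one_mul] at h2
        omega
    have hc0d0 : c 0 = d 0 := by rw [hXY] at heq; omega
    rcases Nat.eq_zero_or_pos i with rfl | hi0
    · exact hc0d0
    · have := ih (fun i => c (i+1)) (fun i => d (i+1))
        (fun i hi => hc (i+1) (by omega)) (fun i hi => hd (i+1) (by omega)) hXY (i-1) (by omega)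
      simpa [Nat.sub_add_cancel hi0] using this

lemma claim1 (hp : 2 < p) (i : ℤ) :
    Eprop p f ℓ (i + 1) ↔ dig p f ℓ i = p - 1 ∨ (dig p f ℓ i = p - 2 ∧ Eprop p f ℓ i) := by
  constructor
  · rintro ⟨r, hr, hd, hs⟩
    rcases (by omega : r = i ∨ r < i) with rfl | hri
    · exact Or.inl hd
    · refine Or.inr ⟨hs i hri (by omega), ⟨r, hri, hd, fun s h1 h2 => hs s h1 (by omega)⟩⟩
  · rintro (h | ⟨hd, r, hr, hrd, hs⟩)
    · exact ⟨i, by omega, h, fun s h1 h2 => absurd h1 (by omega)⟩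
    · refine ⟨r, by omega, hrd, fun s h1 h2 => ?_⟩
      rcases (by omega : s < i ∨ s = i) with h3 | rfl
      · exact hs s h1 h3
      · exact hd

lemma sig_one (h : ¬ Eprop p f ℓ j) : sigma p f ℓ j = 1 := if_neg h
lemma sig_two (h : Eprop p f ℓ j) : sigma p f ℓ j = 2 := if_pos h

end Stmt8Aux

open Stmt8Aux

/-- Parts (a), (b), (c) of the digit comparison lemma: the digits
`a_i ∈ {1,…,p}` of `−ℓ` mod `ξ` are expressed through `σ^ℓ`, the set `E(ℓ)` and the map
`i_D^ℓ` are expressed through the `a_i`.  In (c) the minimum of the set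
`{j < i : a_j = p and a_s = p−1 for j < s < i} ∪ {i}` is expressed existentially. -/
theorem stmt8 (p f : ℕ) (hp : p.Prime) (hodd : p ≠ 2) (hf : 1 ≤ f)
    (ℓ : ℕ) (hℓ : ℓ ≤ p ^ f - 2)
    (a : ℤ → ℕ) (hper : ∀ j : ℤ, a (j + f) = a j)
    (hbd : ∀ j : ℤ, 1 ≤ a j ∧ a j ≤ p) (hnp : ∃ j : ℤ, a j ≠ p)
    (hcong : ((p : ℤ) ^ f - 1) ∣
        ((ℓ : ℤ) + ∑ i ∈ Finset.range f, (a (i : ℤ) : ℤ) * (p : ℤ) ^ i)) :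
    -- (a)
    (∀ i : ℕ, i < f →
      (a (i : ℤ) : ℤ) = (sigma p f ℓ ((i : ℤ) + 1) : ℤ) * (p : ℤ)
        - (sigma p f ℓ (i : ℤ) : ℤ) - (dig p f ℓ (i : ℤ) : ℤ)) ∧
    -- (b)
    (∀ i : ℕ, i < f →
      (Eprop p f ℓ (i : ℤ) ↔
        ∃ j : ℤ, j < (i : ℤ) ∧ a j = p ∧ ∀ s : ℤ, j < s → s < (i : ℤ) → a s = p - 1)) ∧
    -- (c)
    (∀ i : ℤ, ∃ j : ℤ,
      (j = i ∨ (j < i ∧ a j = p ∧ ∀ s : ℤ, j < s → s < i → a s = p - 1)) ∧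
      (∀ j' : ℤ, (j' = i ∨ (j' < i ∧ a j' = p ∧ ∀ s : ℤ, j' < s → s < i → a s = p - 1)) →
        j ≤ j') ∧
      iD p f ℓ i = (j : ZMod f)) := by
  have hp3 : 3 ≤ p := by
    have := hp.two_le
    rcases Nat.lt_or_ge p 3 with h | h
    · interval_cases p
      · exact absurd rfl hodd
    · exact h
  have hp0 : 0 < p := by omega
  have hf0 : 0 < f := hf
  have hq3 : 3 ≤ p ^ f := le_trans hp3 (Nat.le_self_pow (by omega) p)
  have hℓq : ℓ < p ^ f := by omega
  -- not all digits are p - 1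
  have hsumdig : (∑ i ∈ Finset.range f, dig p f ℓ (i : ℤ) * p ^ i) = ℓ := by
    rw [Finset.sum_congr rfl (fun i hi => by
      rw [dig_nat i (Finset.mem_range.1 hi)])]
    rw [sum_dig_mod p ℓ f, Nat.mod_eq_of_lt hℓq]
  have notall : ∃ i : ℕ, i < f ∧ dig p f ℓ (i : ℤ) ≠ p - 1 := by
    by_contra h
    push_neg at h
    have : (∑ i ∈ Finset.range f, dig p f ℓ (i : ℤ) * p ^ i)
        = ∑ i ∈ Finset.range f, (p - 1) * p ^ i := by
      refine Finset.sum_congr rfl fun i hi => ?_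
      rw [h i (Finset.mem_range.1 hi)]
    rw [hsumdig] at this
    have hgeo : ((p : ℤ) - 1) * (∑ i ∈ Finset.range f, (p : ℤ) ^ i) = (p : ℤ) ^ f - 1 := by
      have := geom_sum_mul (p : ℤ) f
      linarith [this]
    have hz : (ℓ : ℤ) = (p : ℤ) ^ f - 1 := by
      rw [this]
      push_cast [hp0]
      rw [← Finset.mul_sum]
      exact hgeo
    have h1 : (ℓ : ℤ) ≤ (p : ℤ) ^ f - 2 := by
      have : (ℓ : ℤ) ≤ ((p ^ f - 2 : ℕ) : ℤ) := by exact_mod_cast hℓ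
      have h2 : ((p ^ f - 2 : ℕ) : ℤ) = (p : ℤ) ^ f - 2 := by
        push_cast [Nat.cast_sub (by omega : 2 ≤ p ^ f)]
        ring
      omega
    omega
  -- digit-at-every-integer version of notall
  have notallZ : ¬ (∀ s : ℤ, dig p f ℓ s = p - 1) := by
    rintro hall
    obtain ⟨i, hi, hne⟩ := notall
    exact hne (hall _)
  have digper : ∀ s : ℤ, (dig p f ℓ (s + f) = p - 1) ↔ (dig p f ℓ s = p - 1) := by
    intro s; rw [dig_add]
  -- bounds for B i := σ(i+1)p - σ(i) - m(i)
  have hBcase : ∀ i : ℤ, 1 ≤ ((sigma p f ℓ (i+1) : ℤ) * p - sigma p f ℓ i - dig p f ℓ i)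
      ∧ ((sigma p f ℓ (i+1) : ℤ) * p - sigma p f ℓ i - dig p f ℓ i) ≤ p := by
    intro i
    have hd := dig_lt (p := p) (f := f) (ℓ := ℓ) hp0 i
    have hc := claim1 (p := p) (f := f) (ℓ := ℓ) (by omega) i
    by_cases h1 : Eprop p f ℓ (i+1) <;> by_cases h0 : Eprop p f ℓ i
    · rcases hc.mp h1 with h | ⟨h, _⟩ <;> rw [sig_two h1, sig_two h0] <;> push_cast <;> omega
    · have h : dig p f ℓ i = p - 1 := by
        rcases hc.mp h1 with h | ⟨_, h'⟩
        · exact h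
        · exact absurd h' h0
      rw [sig_two h1, sig_one h0]; push_cast; omega
    · have h2 : dig p f ℓ i ≠ p - 1 := fun h => h1 (hc.mpr (Or.inl h))
      have h3 : dig p f ℓ i ≠ p - 2 := fun h => h1 (hc.mpr (Or.inr ⟨h, h0⟩))
      rw [sig_one h1, sig_two h0]; push_cast; omega
    · have h2 : dig p f ℓ i ≠ p - 1 := fun h => h1 (hc.mpr (Or.inl h))
      rw [sig_one h1, sig_one h0]; push_cast; omega
  -- telescoping sum
  have hsig1 : ∀ i : ℤ, 1 ≤ sigma p f ℓ i ∧ sigma p f ℓ i ≤ 2 := by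
    intro i; unfold sigma; split <;> omega
  have hsumdigZ : ∑ i ∈ Finset.range f, (dig p f ℓ (i : ℤ) : ℤ) * (p : ℤ) ^ i = (ℓ : ℤ) := by
    calc ∑ i ∈ Finset.range f, (dig p f ℓ (i : ℤ) : ℤ) * (p : ℤ) ^ i
        = ((∑ i ∈ Finset.range f, dig p f ℓ (i : ℤ) * p ^ i : ℕ) : ℤ) := by push_cast; ring
      _ = (ℓ : ℤ) := by rw [hsumdig]
  have hsigf : (sigma p f ℓ ((f : ℕ) : ℤ) : ℤ) = (sigma p f ℓ 0 : ℤ) := by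
    have : Eprop p f ℓ ((f : ℕ) : ℤ) ↔ Eprop p f ℓ 0 := by
      simpa using Eprop_add (p := p) (f := f) (ℓ := ℓ) 0
    unfold sigma
    rw [if_congr this rfl rfl]
  have hBsum : ∑ i ∈ Finset.range f,
      ((sigma p f ℓ ((i : ℤ)+1) : ℤ) * p - sigma p f ℓ (i : ℤ) - dig p f ℓ (i : ℤ)) * (p : ℤ) ^ i
      = (sigma p f ℓ 0 : ℤ) * ((p : ℤ) ^ f - 1) - ℓ := by
    have htel : ∑ i ∈ Finset.range f,
        (((sigma p f ℓ (((i+1 : ℕ) : ℤ)) : ℤ) * (p : ℤ) ^ (i+1))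
          - (sigma p f ℓ ((i : ℕ) : ℤ) : ℤ) * (p : ℤ) ^ i)
        = (sigma p f ℓ ((f : ℕ) : ℤ) : ℤ) * (p : ℤ) ^ f - (sigma p f ℓ ((0 : ℕ) : ℤ) : ℤ) * (p : ℤ) ^ 0 :=
      Finset.sum_range_sub (fun i => (sigma p f ℓ ((i : ℕ) : ℤ) : ℤ) * (p : ℤ) ^ i) f
    have hre : ∑ i ∈ Finset.range f,
        ((sigma p f ℓ ((i : ℤ)+1) : ℤ) * p - sigma p f ℓ (i : ℤ) - dig p f ℓ (i : ℤ)) * (p : ℤ) ^ i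
        = (∑ i ∈ Finset.range f,
            (((sigma p f ℓ (((i+1 : ℕ) : ℤ)) : ℤ) * (p : ℤ) ^ (i+1))
              - (sigma p f ℓ ((i : ℕ) : ℤ) : ℤ) * (p : ℤ) ^ i))
          - ∑ i ∈ Finset.range f, (dig p f ℓ (i : ℤ) : ℤ) * (p : ℤ) ^ i := by
      rw [← Finset.sum_sub_distrib]
      refine Finset.sum_congr rfl fun i hi => ?_
      have : (((i+1 : ℕ) : ℤ)) = (i : ℤ) + 1 := by push_cast; ring
      rw [this]
      ring
    rw [hre, htel, hsumdigZ, hsigf]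
    push_cast
    ring
  -- a is periodic in both directions
  have hperiff : ∀ s : ℤ, ∀ v : ℕ, (a (s + f) = v) ↔ (a s = v) := by
    intro s v; rw [hper]
  -- existence of an index < f where a is not p
  have hashift : ∀ (k : ℤ) (s : ℤ), a (s + f * k) = a s := by
    intro k
    induction k using Int.induction_on with
    | zero => simp
    | succ k ih =>
      intro s
      rw [show s + (f : ℤ) * (k + 1) = (s + f * k) + f by ring, hper, ih]
    | pred k ih =>
      intro s
      have := hper (s + f * (-k - 1))
      rw [show s + (f : ℤ) * (-k - 1) + f = s + f * (-k) by ring] at this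
      rw [← this, ih]
  have hnp' : ∃ i0 : ℕ, i0 < f ∧ a (i0 : ℤ) ≤ p - 1 := by
    obtain ⟨j, hj⟩ := hnp
    have hfz : (f : ℤ) ≠ 0 := by exact_mod_cast hf0.ne'
    refine ⟨(j % f).toNat, ?_, ?_⟩
    · have h1 : 0 ≤ j % f := Int.emod_nonneg _ hfz
      have h2 : j % f < f := Int.emod_lt_of_pos _ (by exact_mod_cast hf0)
      omega
    · have h1 : 0 ≤ j % f := Int.emod_nonneg _ hfz
      have he : ((j % f).toNat : ℤ) = j - f * (j / f) := by
        rw [Int.toNat_of_nonneg h1, Int.emod_def]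
      have : a ((j % f).toNat : ℤ) = a j := by
        rw [he, show j - (f : ℤ) * (j / f) = j + f * (-(j / f)) by ring, hashift]
      rw [this]
      have := (hbd j).2
      have := hj
      omega
  -- B is never all-p on range f
  have hBne : ∃ i0 : ℕ, i0 < f ∧
      ((sigma p f ℓ ((i0 : ℤ)+1) : ℤ) * p - sigma p f ℓ (i0 : ℤ) - dig p f ℓ (i0 : ℤ)) ≤ (p : ℤ) - 1 := by
    by_contra h
    push_neg at h
    have hBp : ∀ i0 : ℕ, i0 < f →
        ((sigma p f ℓ ((i0 : ℤ)+1) : ℤ) * p - sigma p f ℓ (i0 : ℤ) - dig p f ℓ (i0 : ℤ)) = p := by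
      intro i0 hi0
      have := (hBcase (i0 : ℤ)).2
      have := h i0 hi0
      omega
    have hEsucc : ∀ i0 : ℕ, i0 < f → Eprop p f ℓ ((i0 : ℤ) + 1) := by
      intro i0 hi0
      by_contra hE
      have hB := hBp i0 hi0
      rw [sig_one hE] at hB
      have := (hsig1 (i0 : ℤ)).1
      have hd : 0 ≤ (dig p f ℓ (i0 : ℤ) : ℤ) := by positivity
      have hp3' : (3 : ℤ) ≤ p := by exact_mod_cast hp3
      omega
    have hEall : ∀ s : ℤ, Eprop p f ℓ s := by
      refine per_all hf0 (fun s => Eprop_add s) 1 (fun s h1 h2 => ?_)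
      have hk : ((s - 1).toNat : ℤ) = s - 1 := by omega
      have := hEsucc (s - 1).toNat (by omega)
      rwa [hk, show s - 1 + 1 = s by ring] at this
    have hdigall : ∀ s : ℤ, dig p f ℓ s = p - 2 := by
      refine per_all hf0 (fun s => by rw [dig_add]) 0 (fun s h1 h2 => ?_)
      have hk : (s.toNat : ℤ) = s := by omega
      have hB := hBp s.toNat (by omega)
      rw [hk] at hB
      rw [sig_two (hEall (s + 1)), sig_two (hEall s)] at hB
      have hp3' : (3 : ℤ) ≤ p := by exact_mod_cast hp3
      omega
    obtain ⟨r, _, hrd, _⟩ := hEall 0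
    rw [hdigall r] at hrd
    omega
  have hU : ((p : ℤ) - 1) * (∑ i ∈ Finset.range f, (p : ℤ) ^ i) = (p : ℤ) ^ f - 1 := by
    have := geom_sum_mul (p : ℤ) f
    linarith
  have hbound : ∀ c : ℕ → ℤ, (∀ i, i < f → 1 ≤ c i ∧ c i ≤ p) →
      (∃ i0, i0 < f ∧ c i0 ≤ (p : ℤ) - 1) →
      (∑ i ∈ Finset.range f, (p : ℤ) ^ i) ≤ (∑ i ∈ Finset.range f, c i * (p : ℤ) ^ i) ∧
      (∑ i ∈ Finset.range f, c i * (p : ℤ) ^ i)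
        ≤ (p : ℤ) * (∑ i ∈ Finset.range f, (p : ℤ) ^ i) - 1 := by
    rintro c hc ⟨i0, hi0, hci0⟩
    have hpow : ∀ i : ℕ, (0 : ℤ) < (p : ℤ) ^ i := fun i => by positivity
    constructor
    · have he : (∑ i ∈ Finset.range f, (p : ℤ) ^ i)
          = ∑ i ∈ Finset.range f, 1 * (p : ℤ) ^ i :=
        Finset.sum_congr rfl fun i _ => (one_mul _).symm
      rw [he]
      exact Finset.sum_le_sum fun i hi =>
        mul_le_mul_of_nonneg_right (hc i (Finset.mem_range.1 hi)).1 (hpow i).le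
    · have h1 : (1 : ℤ) ≤ ∑ i ∈ Finset.range f, ((p : ℤ) - c i) * (p : ℤ) ^ i := by
        have hterm : (1 : ℤ) ≤ ((p : ℤ) - c i0) * (p : ℤ) ^ i0 := by
          have ha : (1 : ℤ) ≤ (p : ℤ) - c i0 := by omega
          have hb : (1 : ℤ) ≤ (p : ℤ) ^ i0 := (hpow i0)
          nlinarith
        refine le_trans hterm (Finset.single_le_sum (f := fun i => ((p : ℤ) - c i) * (p : ℤ) ^ i)
          (fun i hi => ?_) (Finset.mem_range.2 hi0))
        have := (hc i (Finset.mem_range.1 hi)).2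
        exact mul_nonneg (by omega) (hpow i).le
      have h2 : ∑ i ∈ Finset.range f, c i * (p : ℤ) ^ i
          = (p : ℤ) * (∑ i ∈ Finset.range f, (p : ℤ) ^ i)
            - ∑ i ∈ Finset.range f, ((p : ℤ) - c i) * (p : ℤ) ^ i := by
        rw [Finset.mul_sum, ← Finset.sum_sub_distrib]
        exact Finset.sum_congr rfl fun i _ => by ring
      omega
    -- the two sums agree
  have hboundA := hbound (fun i => (a (i : ℤ) : ℤ))
    (fun i _ => by have := hbd (i : ℤ); constructor <;> push_cast <;> omega)
    (by obtain ⟨i0, h1, h2⟩ := hnp'; exact ⟨i0, h1, by push_cast; omega⟩)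
  have hboundB := hbound
    (fun i => (sigma p f ℓ ((i : ℤ)+1) : ℤ) * p - sigma p f ℓ (i : ℤ) - dig p f ℓ (i : ℤ))
    (fun i _ => hBcase (i : ℤ)) hBne
  have hsumeq : ∑ i ∈ Finset.range f, (a (i : ℤ) : ℤ) * (p : ℤ) ^ i
      = ∑ i ∈ Finset.range f,
        ((sigma p f ℓ ((i : ℤ)+1) : ℤ) * p - sigma p f ℓ (i : ℤ) - dig p f ℓ (i : ℤ)) * (p : ℤ) ^ i := by
    set SA := ∑ i ∈ Finset.range f, (a (i : ℤ) : ℤ) * (p : ℤ) ^ i with hSA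
    set SB := ∑ i ∈ Finset.range f,
        ((sigma p f ℓ ((i : ℤ)+1) : ℤ) * p - sigma p f ℓ (i : ℤ) - dig p f ℓ (i : ℤ)) * (p : ℤ) ^ i with hSB
    have hdvd2 : ((p : ℤ) ^ f - 1) ∣ ((ℓ : ℤ) + SB) := by
      rw [hBsum]
      exact ⟨(sigma p f ℓ 0 : ℤ), by ring⟩
    have hdvdD : ((p : ℤ) ^ f - 1) ∣ (SA - SB) := by
      have := dvd_sub hcong hdvd2
      simpa using this
    have h0 : SA - SB = 0 := by
      refine Int.eq_zero_of_abs_lt_dvd hdvdD ?_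
      rw [abs_lt]
      constructor <;> nlinarith [hboundA.1, hboundA.2, hboundB.1, hboundB.2, hU]
    omega
  -- identify a with the B digits on range f, via uniqueness of digit expansions
  have keyfin : ∀ i : ℕ, i < f →
      (a (i : ℤ) : ℤ) = (sigma p f ℓ ((i : ℤ)+1) : ℤ) * p - sigma p f ℓ (i : ℤ) - dig p f ℓ (i : ℤ) := by
    have hbnat : ∀ i : ℕ,
        ((((sigma p f ℓ ((i : ℤ)+1) : ℤ) * p - sigma p f ℓ (i : ℤ) - dig p f ℓ (i : ℤ)).toNat : ℤ))
        = (sigma p f ℓ ((i : ℤ)+1) : ℤ) * p - sigma p f ℓ (i : ℤ) - dig p f ℓ (i : ℤ) := by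
      intro i
      exact Int.toNat_of_nonneg (by linarith [(hBcase (i : ℤ)).1])
    have hnateq : (∑ i ∈ Finset.range f, a (i : ℤ) * p ^ i)
        = ∑ i ∈ Finset.range f,
          ((sigma p f ℓ ((i : ℤ)+1) : ℤ) * p - sigma p f ℓ (i : ℤ) - dig p f ℓ (i : ℤ)).toNat * p ^ i := by
      have castA : ((∑ i ∈ Finset.range f, a (i : ℤ) * p ^ i : ℕ) : ℤ)
          = ∑ i ∈ Finset.range f, (a (i : ℤ) : ℤ) * (p : ℤ) ^ i := by
        push_cast; ring
      have castB : ((∑ i ∈ Finset.range f,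
            ((sigma p f ℓ ((i : ℤ)+1) : ℤ) * p - sigma p f ℓ (i : ℤ) - dig p f ℓ (i : ℤ)).toNat * p ^ i : ℕ) : ℤ)
          = ∑ i ∈ Finset.range f,
            ((sigma p f ℓ ((i : ℤ)+1) : ℤ) * p - sigma p f ℓ (i : ℤ) - dig p f ℓ (i : ℤ)) * (p : ℤ) ^ i := by
        rw [Nat.cast_sum]
        refine Finset.sum_congr rfl fun i _ => ?_
        rw [Nat.cast_mul, Nat.cast_pow, hbnat i]
      have : ((∑ i ∈ Finset.range f, a (i : ℤ) * p ^ i : ℕ) : ℤ)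
          = ((∑ i ∈ Finset.range f,
            ((sigma p f ℓ ((i : ℤ)+1) : ℤ) * p - sigma p f ℓ (i : ℤ) - dig p f ℓ (i : ℤ)).toNat * p ^ i : ℕ) : ℤ) := by
        rw [castA, castB]; exact hsumeq
      exact_mod_cast this
    intro i hi
    have huq := uniq (p := p) hp0 f (fun i => a (i : ℤ))
      (fun i => ((sigma p f ℓ ((i : ℤ)+1) : ℤ) * p - sigma p f ℓ (i : ℤ) - dig p f ℓ (i : ℤ)).toNat)
      (fun i _ => hbd (i : ℤ))
      (fun i _ => by
        have h1 := (hBcase (i : ℤ)).1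
        have h2 := (hBcase (i : ℤ)).2
        constructor
        · have h3 : (1 : ℤ) ≤ ((((sigma p f ℓ ((i : ℤ)+1) : ℤ) * p - sigma p f ℓ (i : ℤ)
              - dig p f ℓ (i : ℤ)).toNat : ℕ) : ℤ) := by rw [hbnat i]; exact h1
          exact_mod_cast h3
        · have h3 : ((((sigma p f ℓ ((i : ℤ)+1) : ℤ) * p - sigma p f ℓ (i : ℤ)
              - dig p f ℓ (i : ℤ)).toNat : ℕ) : ℤ) ≤ (p : ℤ) := by rw [hbnat i]; exact h2
          exact_mod_cast h3)
      hnateq i hi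
    have h4 : a (i : ℤ) = ((sigma p f ℓ ((i : ℤ)+1) : ℤ) * p - sigma p f ℓ (i : ℤ)
        - dig p f ℓ (i : ℤ)).toNat := by simpa using huq
    rw [h4]
    exact hbnat i
  -- extend to all integers by periodicity
  have key : ∀ i : ℤ,
      (a i : ℤ) = (sigma p f ℓ (i+1) : ℤ) * p - sigma p f ℓ i - dig p f ℓ i := by
    refine per_all hf0 (fun s => ?_) 0 (fun s h1 h2 => ?_)
    · rw [hper, dig_add, sigma_add, show s + (f : ℤ) + 1 = (s + 1) + f by ring, sigma_add]
    · have hk : ((s.toNat : ℕ) : ℤ) = s := by omega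
      have := keyfin s.toNat (by omega)
      rwa [hk] at this
  -- consequences of the digit formula
  have hp3' : (3 : ℤ) ≤ (p : ℤ) := by exact_mod_cast hp3
  have hdig0 : ∀ i : ℤ, (0 : ℤ) ≤ (dig p f ℓ i : ℤ) := fun i => by positivity
  have hdiglt : ∀ i : ℤ, (dig p f ℓ i : ℤ) ≤ (p : ℤ) - 1 := by
    intro i
    have := dig_lt (p := p) (f := f) (ℓ := ℓ) hp0 i
    omega
  have C1 : ∀ i : ℤ, a i = p → Eprop p f ℓ (i + 1) := by
    intro i hai
    by_contra hE
    have hk := key i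
    rw [sig_one hE] at hk
    have h1 := (hsig1 i).1
    have h2 := hdig0 i
    omega
  have C2 : ∀ i : ℤ, a i = p → ¬ Eprop p f ℓ i → dig p f ℓ i = p - 1 := by
    intro i hai hE
    have hk := key i
    rw [sig_two (C1 i hai), sig_one hE] at hk
    omega
  have C3 : ∀ i : ℤ, a i = p → Eprop p f ℓ i → dig p f ℓ i = p - 2 := by
    intro i hai hE
    have hk := key i
    rw [sig_two (C1 i hai), sig_two hE] at hk
    omega
  have C4 : ∀ i : ℤ, a i = p - 1 → Eprop p f ℓ i → dig p f ℓ i = p - 1 := by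
    intro i hai hE
    have hk := key i
    rw [sig_two hE] at hk
    by_cases h1 : Eprop p f ℓ (i + 1)
    · rw [sig_two h1] at hk
      omega
    · rw [sig_one h1] at hk
      have := hdig0 i
      omega
  have C6 : ∀ i : ℤ, a i = p - 1 → Eprop p f ℓ i → Eprop p f ℓ (i + 1) := by
    intro i hai hE
    exact (claim1 (by omega) i).mpr (Or.inl (C4 i hai hE))
  have C5 : ∀ i : ℤ, Eprop p f ℓ i →
      a (i - 1) = p ∨ (a (i - 1) = p - 1 ∧ Eprop p f ℓ (i - 1)) := by
    intro i hE
    have hc := claim1 (p := p) (f := f) (ℓ := ℓ) (by omega) (i - 1)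
    rw [show i - 1 + 1 = i by ring] at hc
    have hk := key (i - 1)
    rw [show i - 1 + 1 = i by ring, sig_two hE] at hk
    rcases hc.mp hE with hd | ⟨hd, hE'⟩
    · by_cases h0 : Eprop p f ℓ (i - 1)
      · rw [sig_two h0] at hk
        exact Or.inr ⟨by omega, h0⟩
      · rw [sig_one h0] at hk
        exact Or.inl (by omega)
    · rw [sig_two hE'] at hk
      exact Or.inl (by omega)
  -- the chain lemma
  have chain : ∀ i j : ℤ, j < i → a j = p → (∀ s : ℤ, j < s → s < i → a s = p - 1) →
      ∀ s : ℤ, j < s → s ≤ i → Eprop p f ℓ s := by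
    intro i j hji haj hmid
    have main : ∀ k : ℕ, j + 1 + k ≤ i → Eprop p f ℓ (j + 1 + k) := by
      intro k
      induction k with
      | zero => intro _; simpa using C1 j haj
      | succ k ih =>
        intro hk
        have hk' : j + 1 + (k : ℤ) ≤ i := by push_cast at hk ⊢; omega
        have hEk := ih hk'
        have has : a (j + 1 + k) = p - 1 := hmid _ (by omega) (by push_cast at hk; omega)
        have := C6 _ has hEk
        rwa [show j + 1 + (k : ℤ) + 1 = j + 1 + ((k : ℕ) + 1 : ℕ) by push_cast; ring] at this
    intro s h1 h2
    have hk : ((s - j - 1).toNat : ℤ) = s - j - 1 := by omega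
    have := main (s - j - 1).toNat (by omega)
    rwa [show j + 1 + ((s - j - 1).toNat : ℤ) = s by omega] at this
  -- part (b), for all integers
  have bgen : ∀ i : ℤ, Eprop p f ℓ i ↔
      ∃ j : ℤ, j < i ∧ a j = p ∧ ∀ s : ℤ, j < s → s < i → a s = p - 1 := by
    intro i
    constructor
    · intro hEi
      have desc : ∀ k : ℕ,
          (∃ j : ℤ, i - k ≤ j ∧ j < i ∧ a j = p ∧ ∀ s : ℤ, j < s → s < i → a s = p - 1)
          ∨ (Eprop p f ℓ (i - k) ∧ ∀ s : ℤ, i - k ≤ s → s < i → a s = p - 1) := by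
        intro k
        induction k with
        | zero =>
          right
          refine ⟨by simpa using hEi, fun s h1 h2 => absurd h1 (by omega)⟩
        | succ k ih =>
          rcases ih with ⟨j, h1, h2, h3, h4⟩ | ⟨hE, hall⟩
          · exact Or.inl ⟨j, by push_cast; push_cast at h1; omega, h2, h3, h4⟩
          · rcases C5 _ hE with hpcase | ⟨hp1, hE'⟩
            · left
              refine ⟨i - k - 1, by push_cast; omega, by omega, hpcase, fun s hs1 hs2 => ?_⟩
              exact hall s (by omega) hs2
            · right
              constructor
              · rwa [show i - ((k : ℕ) + 1 : ℕ) = i - (k : ℤ) - 1 by push_cast; ring]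
              · intro s hs1 hs2
                rcases (by push_cast at hs1; omega : s = i - (k : ℤ) - 1 ∨ i - (k : ℤ) ≤ s) with rfl | h
                · exact hp1
                · exact hall s h hs2
      rcases desc f with ⟨j, _, h2, h3, h4⟩ | ⟨hEf, hall⟩
      · exact ⟨j, h2, h3, h4⟩
      · exfalso
        have hallZ : ∀ s : ℤ, a s = p - 1 := by
          refine per_all hf0 (fun s => hperiff s (p - 1)) (i - f) (fun s h1 h2 => ?_)
          exact hall s h1 (by omega)
        have EpAll : ∀ k : ℕ, Eprop p f ℓ (i - f + k) := by
          intro k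
          induction k with
          | zero => simpa using hEf
          | succ k ih =>
            have := C6 _ (hallZ (i - f + k)) ih
            rwa [show i - (f : ℤ) + (k : ℤ) + 1 = i - f + ((k : ℕ) + 1 : ℕ) by push_cast; ring] at this
        have digAll : ∀ s : ℤ, dig p f ℓ s = p - 1 := by
          refine per_all hf0 digper (i - f) (fun s h1 h2 => ?_)
          have hk : ((s - (i - f)).toNat : ℤ) = s - (i - f) := by omega
          have := C4 _ (hallZ s) ?_
          · exact this
          · have := EpAll (s - (i - f)).toNat
            rwa [hk, show i - (f : ℤ) + (s - (i - f)) = s by ring] at this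
        exact notallZ digAll
    · rintro ⟨j, hji, haj, hmid⟩
      exact chain i j hji haj hmid i hji le_rfl
  -- properties of `run`
  have run_spec : ∀ i' : ℤ,
      (∀ k : ℕ, k < run p f ℓ i' → dig p f ℓ (i' - 1 - k) = p - 1) ∧
      dig p f ℓ (i' - 1 - (run p f ℓ i' : ℤ)) ≠ p - 1 := by
    intro i'
    set F : ℕ → ℕ := fun n =>
      if (∀ j : ℕ, j < n → dig p f ℓ (i' - 1 - (j : ℤ)) = p - 1) then n else 0 with hF
    have hrun : run p f ℓ i' = (Finset.range (f + 1)).sup F := rfl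
    obtain ⟨n0, hn0mem, hn0⟩ := Finset.exists_mem_eq_sup (Finset.range (f + 1))
      ⟨0, Finset.mem_range.2 (by omega)⟩ F
    rw [← hrun] at hn0
    have hCrun : ∀ k : ℕ, k < run p f ℓ i' → dig p f ℓ (i' - 1 - k) = p - 1 := by
      intro k hk
      by_cases hc : (∀ j : ℕ, j < n0 → dig p f ℓ (i' - 1 - (j : ℤ)) = p - 1)
      · have : run p f ℓ i' = n0 := by rw [hn0]; exact if_pos hc
        exact hc k (by omega)
      · have : run p f ℓ i' = 0 := by rw [hn0]; exact if_neg hc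
        omega
    have hle : run p f ℓ i' ≤ f := by
      have : F n0 ≤ n0 := by
        by_cases hc : (∀ j : ℕ, j < n0 → dig p f ℓ (i' - 1 - (j : ℤ)) = p - 1)
        · exact le_of_eq (if_pos hc)
        · have h0 : F n0 = 0 := if_neg hc
          omega
      have := Finset.mem_range.1 hn0mem
      omega
    have hltf : run p f ℓ i' < f := by
      rcases Nat.lt_or_ge (run p f ℓ i') f with h | h
      · exact h
      · exfalso
        have hrf : run p f ℓ i' = f := by omega
        apply notallZ
        refine per_all hf0 digper (i' - f) (fun s h1 h2 => ?_)
        have hk : ((i' - 1 - s).toNat : ℤ) = i' - 1 - s := by omega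
        have := hCrun (i' - 1 - s).toNat (by omega)
        rwa [hk, show i' - 1 - (i' - 1 - s) = s by ring] at this
    constructor
    · exact hCrun
    · intro hcon
      have hcond : ∀ j : ℕ, j < run p f ℓ i' + 1 → dig p f ℓ (i' - 1 - (j : ℤ)) = p - 1 := by
        intro j hj
        rcases (by omega : j < run p f ℓ i' ∨ j = run p f ℓ i') with h | rfl
        · exact hCrun j h
        · exact hcon
      have hmem : run p f ℓ i' + 1 ∈ Finset.range (f + 1) := Finset.mem_range.2 (by omega)
      have hle2 := Finset.le_sup (f := F) hmem
      have h2 : F (run p f ℓ i' + 1) = run p f ℓ i' + 1 := if_pos hcond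
      rw [← hrun, h2] at hle2
      omega
  -- uniqueness characterisation of istart
  have istart_eq : ∀ i' c : ℤ, c ≤ i' → (∀ s : ℤ, c ≤ s → s < i' → dig p f ℓ s = p - 1) →
      dig p f ℓ (c - 1) ≠ p - 1 → istart p f ℓ i' = c := by
    intro i' c hc hall hne
    obtain ⟨hs1, hs2⟩ := run_spec i'
    have h1 : ∀ s : ℤ, i' - (run p f ℓ i' : ℤ) ≤ s → s < i' → dig p f ℓ s = p - 1 := by
      intro s ha hb
      have hk : ((i' - 1 - s).toNat : ℤ) = i' - 1 - s := by omega
      have := hs1 (i' - 1 - s).toNat (by omega)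
      rwa [hk, show i' - 1 - (i' - 1 - s) = s by ring] at this
    unfold istart
    rcases lt_trichotomy c (i' - (run p f ℓ i' : ℤ)) with h | h | h
    · exfalso
      apply hs2
      have := hall (i' - 1 - (run p f ℓ i' : ℤ)) (by omega) (by omega)
      exact this
    · omega
    · exfalso
      exact hne (h1 (c - 1) (by omega) (by omega))
  -- the three parts
  refine ⟨fun i _ => key (i : ℤ), fun i _ => bgen (i : ℤ), fun i => ?_⟩
  by_cases hE' : ∃ j : ℤ, j < i ∧ a j = p ∧ ∀ s : ℤ, j < s → s < i → a s = p - 1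
  · obtain ⟨j, hji, haj, hmid⟩ := hE'
    refine ⟨j, Or.inr ⟨hji, haj, hmid⟩, ?_, ?_⟩
    · rintro j' (rfl | ⟨hj'i, haj', hmid'⟩)
      · exact le_of_lt hji
      · by_contra hlt
        push_neg at hlt
        have h1 : a j = p - 1 := hmid' j hlt hji
        omega
    · have hdigmid : ∀ s : ℤ, j < s → s < i → dig p f ℓ s = p - 1 := by
        intro s h1 h2
        exact C4 s (hmid s h1 h2) (chain i j hji haj hmid s h1 (le_of_lt h2))
      by_cases hEj : Eprop p f ℓ j
      · have hdj : dig p f ℓ j = p - 2 := C3 j haj hEj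
        have his : istart p f ℓ i = j + 1 := by
          refine istart_eq i (j + 1) (by omega) (fun s h1 h2 => hdigmid s (by omega) h2) ?_
          rw [show j + 1 - 1 = j by ring, hdj]
          omega
        have hEj1 : Eprop p f ℓ (j + 1) := C1 j haj
        rw [iD, his, if_pos hEj1, show j + 1 - 1 = j by ring]
      · have hdj : dig p f ℓ j = p - 1 := C2 j haj hEj
        have his : istart p f ℓ i = j := by
          refine istart_eq i j (le_of_lt hji) (fun s h1 h2 => ?_) ?_
          · rcases (by omega : s = j ∨ j < s) with rfl | h
            · exact hdj
            · exact hdigmid s h h2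
          · intro hcon
            apply hEj
            have := (claim1 (p := p) (f := f) (ℓ := ℓ) (by omega) (j - 1)).mpr (Or.inl hcon)
            rwa [show j - 1 + 1 = j by ring] at this
        rw [iD, his, if_neg hEj]
  · refine ⟨i, Or.inl rfl, ?_, ?_⟩
    · rintro j' (rfl | hj')
      · exact le_rfl
      · exact absurd ⟨j', hj'⟩ hE'
    · have hEi : ¬ Eprop p f ℓ i := fun h => hE' ((bgen i).mp h)
      have his : istart p f ℓ i = i := by
        refine istart_eq i i le_rfl (fun s h1 h2 => absurd h1 (by omega)) ?_
        intro hcon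
        apply hEi
        have := (claim1 (p := p) (f := f) (ℓ := ℓ) (by omega) (i - 1)).mpr (Or.inl hcon)
        rwa [show i - 1 + 1 = i by ring] at this
      rw [iD, his, if_neg hEi]
end

section
/- Let p be an odd prime, f ≥ 1, q = p^f, ξ = q−1. Let ℓ ∈ {0,…,q−2} with base-p digits m_i (extended f-periodically), and let (a_i)_{i∈ℤ} be an f-periodic family with a_i ∈ {1,…,p}, not all equal to p, such that ℓ ≡ −Σ_{i=0}^{f−1} a_i p^i (mod ξ). Then: (d) for all integers 0 ≤ i1 < i2 < i1 + f one has 2·σ^ℓ(i1)·p^{i1} − 2·σ^ℓ(i2)·p^{i2} − Σ_{i=i2}^{i1+f−1} m_i p^i + Σ_{i=i1}^{i2−1} m_i p^i ≡ Σ_{i=i2}^{i1+f−1} a_i p^i − Σ_{i=i1}^{i2−1} a_i p^i (mod ξ); and (e) for every integer i ≥ 0 one has ℓ_{[i]} − σ^ℓ(i)·p^i·ξ = −Σ_{j=i}^{i+f−1} a_j p^j. -/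
open scoped Classical

/-- `ℓ_{[i]} = ∑_{j=0}^{f-1} m_{j+i} p^{j+i}`. -/
noncomputable def lbr (p f ℓ : ℕ) (i : ℕ) : ℕ :=
  ∑ j ∈ Finset.range f, dig p f ℓ ((j : ℤ) + (i : ℤ)) * p ^ (j + i)

section Aux

open Finset

private lemma hnat_sum_digits (p : ℕ) (n : ℕ) : ∀ f : ℕ,
    ∑ j ∈ range f, n / p ^ j % p * p ^ j = n % p ^ f := by
  intro f
  induction f with
  | zero => simp [Nat.mod_one]
  | succ f ih =>
    rw [sum_range_succ, ih, pow_succ]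
    have h2 : n % (p ^ f * p) % p ^ f = n % p ^ f := Nat.mod_mod_of_dvd _ (dvd_mul_right _ _)
    have h3 : n % (p ^ f * p) / p ^ f = n / p ^ f % p := Nat.mod_mul_right_div_self n (p ^ f) p
    have h4 := Nat.div_add_mod (n % (p ^ f * p)) (p ^ f)
    rw [h3, h2, Nat.mul_comm] at h4
    omega

private lemma dig_lt {p : ℕ} (hp : 0 < p) (f ℓ : ℕ) (j : ℤ) : dig p f ℓ j < p :=
  Nat.mod_lt _ hp

private lemma dig_emod_eq {p f ℓ : ℕ} {j j' : ℤ} (h : j % (f : ℤ) = j' % (f : ℤ)) :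
    dig p f ℓ j = dig p f ℓ j' := by unfold dig; rw [h]

private lemma dig_period (p f ℓ : ℕ) (j : ℤ) : dig p f ℓ (j + f) = dig p f ℓ j := by
  apply dig_emod_eq
  have := Int.add_mul_emod_self_left (a := j) (b := (f : ℤ)) (c := 1)
  simpa using this

private lemma dig_coe {p f ℓ : ℕ} {j : ℕ} (hj : j < f) : dig p f ℓ (j : ℤ) = ℓ / p ^ j % p := by
  unfold dig
  rw [Int.emod_eq_of_lt (by positivity) (by exact_mod_cast hj)]
  simp

private lemma eprop_shift (p f ℓ : ℕ) (j : ℤ) : Eprop p f ℓ (j + f) ↔ Eprop p f ℓ j := by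
  constructor
  · rintro ⟨r, hr, h1, h2⟩
    refine ⟨r - f, by omega, ?_, fun s hs1 hs2 => ?_⟩
    · have := dig_period p f ℓ (r - f)
      rw [show r - (f : ℤ) + f = r by ring] at this
      rw [this] at h1; exact h1
    · have := dig_period p f ℓ s
      rw [← this]; exact h2 (s + f) (by omega) (by omega)
  · rintro ⟨r, hr, h1, h2⟩
    refine ⟨r + f, by omega, ?_, fun s hs1 hs2 => ?_⟩
    · rw [dig_period]; exact h1
    · have := dig_period p f ℓ (s - f)
      rw [show s - (f : ℤ) + f = s by ring] at this
      rw [this]; exact h2 (s - f) (by omega) (by omega)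

private lemma eprop_iff (p f ℓ : ℕ) (hp : 3 ≤ p) (hf : 1 ≤ f) (i : ℤ) :
    Eprop p f ℓ i ↔ ∃ t : ℕ, t < f ∧ dig p f ℓ ((t : ℤ) + i) = p - 1 ∧
      ∀ j : ℕ, t < j → j < f → dig p f ℓ ((j : ℤ) + i) = p - 2 := by
  constructor
  · rintro ⟨r, hr, h1, h2⟩
    have hge : i - f ≤ r := by
      by_contra hcon
      push_neg at hcon
      have h3 := h2 (r + f) (by omega) (by omega)
      rw [dig_period] at h3
      rw [h1] at h3
      omega
    have ht : ((r + f - i).toNat : ℤ) = r + f - i := Int.toNat_of_nonneg (by omega)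
    refine ⟨(r + f - i).toNat, by omega, ?_, ?_⟩
    · rw [show ((r + f - i).toNat : ℤ) + i = r + (f : ℤ) by omega, dig_period]
      exact h1
    · intro j hj1 hj2
      have := dig_period p f ℓ ((j : ℤ) + i - f)
      rw [show (j : ℤ) + i - f + f = (j : ℤ) + i by ring] at this
      rw [this]
      exact h2 _ (by omega) (by omega)
  · rintro ⟨t, ht, h1, h2⟩
    refine ⟨(t : ℤ) + i - f, by omega, ?_, fun s hs1 hs2 => ?_⟩
    · have := dig_period p f ℓ ((t : ℤ) + i - f)
      rw [show (t : ℤ) + i - f + f = (t : ℤ) + i by ring] at this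
      rw [← this]; exact h1
    · have hj : ((s - i + f).toNat : ℤ) = s - i + f := Int.toNat_of_nonneg (by omega)
      have := dig_period p f ℓ s
      rw [← this, show s + (f : ℤ) = ((s - i + f).toNat : ℤ) + i by omega]
      exact h2 _ (by omega) (by omega)

/-- digit-comparison lemma: `ξ - C < L` iff top run of digits is `p-1, p-2, ..., p-2`. -/
private lemma DL {p f : ℕ} (hp : 3 ≤ p) (hf : 1 ≤ f) (m : ℕ → ℕ)
    (hm : ∀ j, j < f → m j ≤ p - 1) :
    ((p : ℤ) ^ f - 1) - (∑ j ∈ range f, (p : ℤ) ^ j) < ∑ j ∈ range f, (m j : ℤ) * (p : ℤ) ^ j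
    ↔ ∃ t : ℕ, t < f ∧ m t = p - 1 ∧ ∀ j : ℕ, t < j → j < f → m j = p - 2 := by
  have hgeom : ∀ n : ℕ, (∑ j ∈ range n, (p : ℤ) ^ j) * ((p : ℤ) - 1) = (p : ℤ) ^ n - 1 :=
    fun n => geom_sum_mul _ n
  have hCnn : ∀ n : ℕ, (0 : ℤ) ≤ ∑ j ∈ range n, (p : ℤ) ^ j :=
    fun n => sum_nonneg fun j _ => by positivity
  have hCle : ∀ n : ℕ, (∑ j ∈ range n, (p : ℤ) ^ j) ≤ (p : ℤ) ^ n - 1 := by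
    intro n
    nlinarith [hgeom n, hCnn n, (by exact_mod_cast hp : (3 : ℤ) ≤ p)]
  have hpZ : (3 : ℤ) ≤ p := by exact_mod_cast hp
  have hsplit : ∑ j ∈ range f, ((m j : ℤ) - ((p : ℤ) - 2)) * (p : ℤ) ^ j
      = (∑ j ∈ range f, (m j : ℤ) * (p : ℤ) ^ j)
        - (((p : ℤ) ^ f - 1) - ∑ j ∈ range f, (p : ℤ) ^ j) := by
    have h1 : ∑ j ∈ range f, ((m j : ℤ) - ((p : ℤ) - 2)) * (p : ℤ) ^ j
        = (∑ j ∈ range f, (m j : ℤ) * (p : ℤ) ^ j)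
          - ((p : ℤ) - 2) * ∑ j ∈ range f, (p : ℤ) ^ j := by
      rw [Finset.mul_sum, ← Finset.sum_sub_distrib]
      exact sum_congr rfl fun j _ => by ring
    rw [h1]
    nlinarith [hgeom f]
  constructor
  · intro h
    by_contra hne
    push_neg at hne
    set S : Finset ℕ := (range f).filter (fun j => m j ≠ p - 2) with hS
    by_cases hSne : S.Nonempty
    · set t := S.max' hSne with htdef
      have htS : t ∈ S := S.max'_mem hSne
      have htf : t < f := mem_range.1 (mem_filter.1 htS).1
      have htne : m t ≠ p - 2 := (mem_filter.1 htS).2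
      have htop : ∀ j : ℕ, t < j → j < f → m j = p - 2 := by
        intro j hj1 hj2
        by_contra hc
        exact absurd (S.le_max' j (mem_filter.2 ⟨mem_range.2 hj2, hc⟩)) (by omega)
      have hmt : m t ≠ p - 1 := by
        intro hc
        obtain ⟨j, hj1, hj2, hj3⟩ := hne t htf hc
        exact hj3 (htop j hj1 hj2)
      have hm' := hm t htf
      have h0 : m t + 3 ≤ p := by omega
      have hmtZ : (m t : ℤ) ≤ (p : ℤ) - 3 := by
        have hcc : ((m t : ℕ) : ℤ) + 3 ≤ (p : ℤ) := by exact_mod_cast h0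
        linarith
      -- D < 0
      have hd1 : ∑ j ∈ range f, ((m j : ℤ) - ((p : ℤ) - 2)) * (p : ℤ) ^ j
          = (∑ j ∈ range t, ((m j : ℤ) - ((p : ℤ) - 2)) * (p : ℤ) ^ j)
            + ((m t : ℤ) - ((p : ℤ) - 2)) * (p : ℤ) ^ t := by
        rw [← Finset.sum_range_add_sum_Ico _ (show t + 1 ≤ f by omega), sum_range_succ]
        have hz : ∑ j ∈ Ico (t + 1) f, ((m j : ℤ) - ((p : ℤ) - 2)) * (p : ℤ) ^ j = 0 := by
          apply Finset.sum_eq_zero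
          intro j hj
          have hj' := mem_Ico.1 hj
          have := htop j (by omega) hj'.2
          have hcast : (m j : ℤ) = (p : ℤ) - 2 := by
            rw [this]; push_cast [Nat.cast_sub (by omega : 2 ≤ p)]; ring
          rw [hcast]; ring
        rw [hz]; ring
      have hb1 : ∑ j ∈ range t, ((m j : ℤ) - ((p : ℤ) - 2)) * (p : ℤ) ^ j
          ≤ ∑ j ∈ range t, (p : ℤ) ^ j := by
        apply Finset.sum_le_sum
        intro j hj
        have hmj : (m j : ℤ) ≤ (p : ℤ) - 1 := by
          have h2' : m j + 1 ≤ p := by have := hm j (by have := mem_range.1 hj; omega); omega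
          have hcc : ((m j : ℕ) : ℤ) + 1 ≤ (p : ℤ) := by exact_mod_cast h2'
          linarith
        nlinarith [pow_nonneg (by linarith : (0:ℤ) ≤ (p:ℤ)) j]
      have hpt : (0 : ℤ) < (p : ℤ) ^ t := by positivity
      rw [hsplit] at hd1
      have hterm : ((m t : ℤ) - ((p : ℤ) - 2)) * (p : ℤ) ^ t ≤ -1 * (p : ℤ) ^ t :=
        mul_le_mul_of_nonneg_right (by linarith) (by positivity)
      linarith [hCle t, hb1, hd1, hterm]
    · -- all digits equal p - 2
      have hall : ∀ j : ℕ, j < f → m j = p - 2 := by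
        intro j hj
        by_contra hc
        exact hSne ⟨j, mem_filter.2 ⟨mem_range.2 hj, hc⟩⟩
      have : ∑ j ∈ range f, ((m j : ℤ) - ((p : ℤ) - 2)) * (p : ℤ) ^ j = 0 := by
        apply Finset.sum_eq_zero
        intro j hj
        have := hall j (mem_range.1 hj)
        have hcast : (m j : ℤ) = (p : ℤ) - 2 := by
          rw [this]; push_cast [Nat.cast_sub (by omega : 2 ≤ p)]; ring
        rw [hcast]; ring
      rw [hsplit] at this
      linarith
  · rintro ⟨t, htf, h1, h2⟩
    have hd1 : ∑ j ∈ range f, ((m j : ℤ) - ((p : ℤ) - 2)) * (p : ℤ) ^ j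
        = (∑ j ∈ range t, ((m j : ℤ) - ((p : ℤ) - 2)) * (p : ℤ) ^ j)
          + ((m t : ℤ) - ((p : ℤ) - 2)) * (p : ℤ) ^ t := by
      rw [← Finset.sum_range_add_sum_Ico _ (show t + 1 ≤ f by omega), sum_range_succ]
      have hz : ∑ j ∈ Ico (t + 1) f, ((m j : ℤ) - ((p : ℤ) - 2)) * (p : ℤ) ^ j = 0 := by
        apply Finset.sum_eq_zero
        intro j hj
        have hj' := mem_Ico.1 hj
        have := h2 j (by omega) hj'.2
        have hcast : (m j : ℤ) = (p : ℤ) - 2 := by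
          rw [this]; push_cast [Nat.cast_sub (by omega : 2 ≤ p)]; ring
        rw [hcast]; ring
      rw [hz]; ring
    have hmtZ : (m t : ℤ) = (p : ℤ) - 1 := by
      rw [h1]; push_cast [Nat.cast_sub (by omega : 1 ≤ p)]; ring
    have hb1 : ∑ j ∈ range t, (-((p : ℤ) - 2)) * (p : ℤ) ^ j
        ≤ ∑ j ∈ range t, ((m j : ℤ) - ((p : ℤ) - 2)) * (p : ℤ) ^ j := by
      apply Finset.sum_le_sum
      intro j hj
      have : (0 : ℤ) ≤ (m j : ℤ) := by positivity
      nlinarith [pow_nonneg (by linarith : (0:ℤ) ≤ (p:ℤ)) j]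
    have hb2 : ∑ j ∈ range t, (-((p : ℤ) - 2)) * (p : ℤ) ^ j
        = -(((p : ℤ) - 2) * ∑ j ∈ range t, (p : ℤ) ^ j) := by
      rw [Finset.mul_sum, ← Finset.sum_neg_distrib]
      exact sum_congr rfl fun j _ => by ring
    have hpt : (0 : ℤ) < (p : ℤ) ^ t := by positivity
    rw [hsplit] at hd1
    rw [hmtZ] at hd1
    have hgt := hgeom t
    nlinarith [hCle t, hCnn t, hb1, hb2, hd1, hgt]

/-- interval lemma -/
private lemma IL {ξ C X Y : ℤ} (hξ : 0 < ξ) (hC1 : 1 ≤ C) (hCξ : C ≤ ξ)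
    (hX0 : 0 ≤ X) (hX1 : X ≤ ξ - 1) (hY0 : C ≤ Y) (hY1 : Y ≤ ξ + C - 1)
    (hd : ξ ∣ X + Y) : X + Y = (if ξ - C < X then 2 else 1) * ξ := by
  obtain ⟨k, hk⟩ := hd
  have hk1 : 1 ≤ k := by nlinarith
  have hk2 : k ≤ 2 := by nlinarith
  split_ifs with h
  · have h4 : 2 ≤ k := by nlinarith
    have : k = 2 := by omega
    rw [hk, this]; ring
  · push_neg at h
    have h4 : k ≤ 1 := by nlinarith
    have : k = 1 := by omega
    rw [hk, this]; ring

/-- generic shifted weighted sum -/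
private noncomputable def gsum (p f : ℕ) (b : ℤ → ℕ) (i : ℕ) : ℤ :=
  ∑ j ∈ Finset.range f, (b ((j : ℤ) + (i : ℤ)) : ℤ) * (p : ℤ) ^ j

private lemma gsum_Ico (p f : ℕ) (b : ℤ → ℕ) (i : ℕ) :
    ∑ j ∈ Finset.Ico i (i + f), (b (j : ℤ) : ℤ) * (p : ℤ) ^ j = (p : ℤ) ^ i * gsum p f b i := by
  rw [Finset.sum_Ico_eq_sum_range]
  simp only [add_tsub_cancel_left]
  unfold gsum
  rw [Finset.mul_sum]
  apply sum_congr rfl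
  intro j _
  have h1 : ((i + j : ℕ) : ℤ) = (j : ℤ) + (i : ℤ) := by push_cast; ring
  rw [h1, pow_add]
  ring

private lemma gsum_step (p f : ℕ) {b : ℤ → ℕ} (hb : ∀ j : ℤ, b (j + f) = b j) (i : ℕ) :
    (p : ℤ) ^ (i + 1) * gsum p f b (i + 1)
      = (p : ℤ) ^ i * gsum p f b i + (b (i : ℤ) : ℤ) * (p : ℤ) ^ i * ((p : ℤ) ^ f - 1) := by
  have key : (p : ℤ) ^ (i + 1) * gsum p f b (i + 1)
      = ∑ j ∈ range f, (fun j : ℕ => (b ((j : ℤ) + (i : ℤ)) : ℤ) * (p : ℤ) ^ (j + i)) (j + 1) := by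
    unfold gsum
    rw [Finset.mul_sum]
    apply sum_congr rfl
    intro j _
    simp only
    have h1 : ((j : ℤ) + ((i + 1 : ℕ) : ℤ)) = (((j + 1 : ℕ) : ℤ) + (i : ℤ)) := by push_cast; ring
    rw [h1, pow_add]
    ring
  rw [key]
  have h2 := Finset.sum_range_succ' (fun j : ℕ => (b ((j : ℤ) + (i : ℤ)) : ℤ) * (p : ℤ) ^ (j + i)) f
  have h3 := Finset.sum_range_succ (fun j : ℕ => (b ((j : ℤ) + (i : ℤ)) : ℤ) * (p : ℤ) ^ (j + i)) f
  have h4 : (p : ℤ) ^ i * gsum p f b i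
      = ∑ j ∈ range f, (b ((j : ℤ) + (i : ℤ)) : ℤ) * (p : ℤ) ^ (j + i) := by
    unfold gsum
    rw [Finset.mul_sum]
    exact sum_congr rfl fun j _ => by rw [pow_add]; ring
  have h5 : (b ((f : ℤ) + (i : ℤ)) : ℤ) = (b (i : ℤ) : ℤ) := by
    rw [show (f : ℤ) + (i : ℤ) = (i : ℤ) + (f : ℤ) by ring, hb]
  have h6 : (p : ℤ) ^ (f + i) = (p : ℤ) ^ f * (p : ℤ) ^ i := pow_add _ _ _
  rw [h4]
  rw [h5, h6] at h3
  simp only [Nat.cast_zero, zero_add, pow_zero, Nat.zero_add] at h2 h3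
  linarith [h2, h3]

end Aux

/-- Parts (d) and (e) of the digit comparison lemma. -/
theorem stmt9 (p f : ℕ) (hp : p.Prime) (hodd : p ≠ 2) (hf : 1 ≤ f)
    (ℓ : ℕ) (hℓ : ℓ ≤ p ^ f - 2)
    (a : ℤ → ℕ) (hper : ∀ j : ℤ, a (j + f) = a j)
    (hbd : ∀ j : ℤ, 1 ≤ a j ∧ a j ≤ p) (hnp : ∃ j : ℤ, a j ≠ p)
    (hcong : ((p : ℤ) ^ f - 1) ∣
        ((ℓ : ℤ) + ∑ i ∈ Finset.range f, (a (i : ℤ) : ℤ) * (p : ℤ) ^ i)) :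
    -- (d)
    (∀ i1 i2 : ℕ, i1 < i2 → i2 < i1 + f →
      (2 * (sigma p f ℓ (i1 : ℤ) : ℤ) * (p : ℤ) ^ i1
          - 2 * (sigma p f ℓ (i2 : ℤ) : ℤ) * (p : ℤ) ^ i2
          - (∑ i ∈ Finset.Ico i2 (i1 + f), (dig p f ℓ (i : ℤ) : ℤ) * (p : ℤ) ^ i)
          + (∑ i ∈ Finset.Ico i1 i2, (dig p f ℓ (i : ℤ) : ℤ) * (p : ℤ) ^ i))
        ≡ ((∑ i ∈ Finset.Ico i2 (i1 + f), (a (i : ℤ) : ℤ) * (p : ℤ) ^ i)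
            - (∑ i ∈ Finset.Ico i1 i2, (a (i : ℤ) : ℤ) * (p : ℤ) ^ i))
          [ZMOD ((p : ℤ) ^ f - 1)]) ∧
    -- (e)
    (∀ i : ℕ,
      (lbr p f ℓ i : ℤ) - (sigma p f ℓ (i : ℤ) : ℤ) * (p : ℤ) ^ i * ((p : ℤ) ^ f - 1)
        = - ∑ j ∈ Finset.Ico i (i + f), (a (j : ℤ) : ℤ) * (p : ℤ) ^ j) := by
  classical
  have hp3 : 3 ≤ p := by have := hp.two_le; omega
  have hpZ : (3 : ℤ) ≤ (p : ℤ) := by exact_mod_cast hp3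
  have hf0 : 0 < f := hf
  have hgeomf : (∑ j ∈ Finset.range f, (p : ℤ) ^ j) * ((p : ℤ) - 1) = (p : ℤ) ^ f - 1 :=
    geom_sum_mul _ f
  have hCnn : (0 : ℤ) ≤ ∑ j ∈ Finset.range f, (p : ℤ) ^ j :=
    Finset.sum_nonneg fun j _ => by positivity
  have hC1 : (1 : ℤ) ≤ ∑ j ∈ Finset.range f, (p : ℤ) ^ j := by
    have h0 : ((p : ℤ) ^ 0) ≤ ∑ j ∈ Finset.range f, (p : ℤ) ^ j :=
      Finset.single_le_sum (f := fun j => (p : ℤ) ^ j) (fun j _ => by positivity)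
        (Finset.mem_range.2 hf0)
    simpa using h0
  have hξ2 : (2 : ℤ) ≤ (p : ℤ) ^ f - 1 := by nlinarith [hgeomf, hC1, hpZ]
  have hCξ : (∑ j ∈ Finset.range f, (p : ℤ) ^ j) ≤ (p : ℤ) ^ f - 1 := by
    nlinarith [hgeomf, hCnn, hpZ]
  have hξpos : (0 : ℤ) < (p : ℤ) ^ f - 1 := by linarith
  have hpf2 : 2 ≤ p ^ f := by
    have h1 : p ≤ p ^ f := Nat.le_self_pow (by omega) p
    omega
  have hℓlt : ℓ < p ^ f := by omega
  have hℓZ : (ℓ : ℤ) ≤ (p : ℤ) ^ f - 2 := by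
    have h1 : ((ℓ : ℕ) : ℤ) ≤ ((p ^ f - 2 : ℕ) : ℤ) := Nat.cast_le.2 hℓ
    rw [Nat.cast_sub hpf2] at h1
    push_cast at h1
    linarith
  have hdig_le : ∀ j : ℤ, (dig p f ℓ j : ℤ) ≤ (p : ℤ) - 1 := by
    intro j
    have h1 : dig p f ℓ j < p := dig_lt (by omega) f ℓ j
    have h2 : ((dig p f ℓ j : ℕ) : ℤ) + 1 ≤ (p : ℤ) := by exact_mod_cast h1
    linarith
  have hdig_per : ∀ j : ℤ, dig p f ℓ (j + f) = dig p f ℓ j := dig_period p f ℓ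
  have haper' : ∀ j : ℤ, a (j - f) = a j := by
    intro j
    have h := hper (j - f)
    rw [show j - (f : ℤ) + f = j by ring] at h
    exact h.symm
  have haZ : ∀ (j k : ℤ), a (j + (f : ℤ) * k) = a j := by
    intro j k
    induction k using Int.induction_on with
    | zero => simp
    | succ k ih =>
        rw [show j + (f : ℤ) * ((k : ℤ) + 1) = (j + (f : ℤ) * k) + (f : ℤ) by ring, hper, ih]
    | pred k ih =>
        rw [show j + (f : ℤ) * (-(k : ℤ) - 1) = (j + (f : ℤ) * (-(k : ℤ))) - (f : ℤ) by ring,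
          haper', ih]
  have haE : ∀ j j' : ℤ, j % (f : ℤ) = j' % (f : ℤ) → a j = a j' := by
    intro j j' h
    have hd : (f : ℤ) ∣ j' - j := by
      rw [Int.dvd_iff_emod_eq_zero, Int.sub_emod, h, sub_self, Int.zero_emod]
    obtain ⟨k, hk⟩ := hd
    have h2 : j' = j + (f : ℤ) * k := by linarith
    rw [h2, haZ]
  set Lg : ℕ → ℤ := gsum p f (dig p f ℓ) with hLg
  set Ag : ℕ → ℤ := gsum p f a with hAg
  have hlbr : ∀ i : ℕ, (lbr p f ℓ i : ℤ) = (p : ℤ) ^ i * Lg i := by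
    intro i
    have h1 : (lbr p f ℓ i : ℤ)
        = ∑ j ∈ Finset.range f, (dig p f ℓ ((j : ℤ) + (i : ℤ)) : ℤ) * (p : ℤ) ^ (j + i) := by
      unfold lbr; push_cast; ring
    rw [h1, hLg]; unfold gsum; rw [Finset.mul_sum]
    exact Finset.sum_congr rfl fun j _ => by rw [pow_add]; ring
  have hIco_a : ∀ i : ℕ,
      (∑ j ∈ Finset.Ico i (i + f), (a (j : ℤ) : ℤ) * (p : ℤ) ^ j) = (p : ℤ) ^ i * Ag i :=
    fun i => gsum_Ico p f a i
  have hLstep := gsum_step p f hdig_per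
  have hAstep := gsum_step p f hper
  have hL0 : (p : ℤ) ^ 0 * Lg 0 = (ℓ : ℤ) := by
    rw [pow_zero, one_mul, hLg]
    unfold gsum
    have h1 : ∀ j ∈ Finset.range f, (dig p f ℓ ((j : ℤ) + ((0 : ℕ) : ℤ)) : ℤ) * (p : ℤ) ^ j
        = ((ℓ / p ^ j % p * p ^ j : ℕ) : ℤ) := by
      intro j hj
      rw [show (j : ℤ) + ((0 : ℕ) : ℤ) = (j : ℤ) by push_cast; ring,
        dig_coe (Finset.mem_range.1 hj)]
      push_cast; ring
    rw [Finset.sum_congr rfl h1, ← Nat.cast_sum]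
    rw [hnat_sum_digits p ℓ f, Nat.mod_eq_of_lt hℓlt]
  have hA0 : (p : ℤ) ^ 0 * Ag 0 = ∑ i ∈ Finset.range f, (a (i : ℤ) : ℤ) * (p : ℤ) ^ i := by
    rw [pow_zero, one_mul, hAg]
    unfold gsum
    exact Finset.sum_congr rfl fun j _ => by norm_num
  have hdvdMN : ∀ i : ℕ, ((p : ℤ) ^ f - 1) ∣ ((p : ℤ) ^ i * Lg i + (p : ℤ) ^ i * Ag i) := by
    intro i
    induction i with
    | zero => rw [hL0, hA0]; exact hcong
    | succ i ih =>
        rw [hLstep i, hAstep i]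
        obtain ⟨k, hk⟩ := ih
        exact ⟨k + ((dig p f ℓ (i : ℤ) : ℤ) + (a (i : ℤ) : ℤ)) * (p : ℤ) ^ i,
          by linear_combination hk⟩
  have hcopP : IsCoprime ((p : ℤ)) ((p : ℤ) ^ f - 1) := by
    refine ⟨(p : ℤ) ^ (f - 1), -1, ?_⟩
    have h1 : (p : ℤ) ^ (f - 1) * (p : ℤ) = (p : ℤ) ^ f := by
      rw [← pow_succ]; congr 1; omega
    rw [h1]; ring
  have hdvdLA : ∀ i : ℕ, ((p : ℤ) ^ f - 1) ∣ (Lg i + Ag i) := by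
    intro i
    have h1 := hdvdMN i
    rw [← mul_add] at h1
    exact ((hcopP.pow_left).symm).dvd_of_dvd_mul_left h1
  have hex0 : ∃ j₀ : ℕ, j₀ < f ∧ dig p f ℓ (j₀ : ℤ) < p - 1 := by
    by_contra hc
    push_neg at hc
    have hall : ∀ j ∈ Finset.range f,
        (dig p f ℓ ((j : ℤ) + ((0 : ℕ) : ℤ)) : ℤ) * (p : ℤ) ^ j
          = ((p : ℤ) - 1) * (p : ℤ) ^ j := by
      intro j hj
      have h1 := hc j (Finset.mem_range.1 hj)
      have h2 : (j : ℤ) + ((0 : ℕ) : ℤ) = (j : ℤ) := by push_cast; ring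
      have h3 : dig p f ℓ (j : ℤ) = p - 1 := by
        have := dig_lt (show 0 < p by omega) f ℓ (j : ℤ); omega
      rw [h2, h3]
      have h4 : ((p - 1 : ℕ) : ℤ) = (p : ℤ) - 1 := by
        push_cast [Nat.cast_sub (by omega : 1 ≤ p)]; ring
      rw [h4]
    have h4 : (p : ℤ) ^ 0 * Lg 0 = ((p : ℤ) ^ f - 1) := by
      rw [pow_zero, one_mul, hLg]; unfold gsum
      rw [Finset.sum_congr rfl hall, ← Finset.mul_sum]
      linear_combination hgeomf
    rw [hL0] at h4
    linarith
  have hdigW : ∀ i : ℕ, ∃ js : ℕ, js < f ∧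
      (dig p f ℓ ((js : ℤ) + (i : ℤ)) : ℤ) ≤ (p : ℤ) - 2 := by
    intro i
    obtain ⟨j₀, hj₀f, hj₀⟩ := hex0
    have hfZ : (0 : ℤ) < (f : ℤ) := by exact_mod_cast hf0
    set x : ℤ := ((j₀ : ℤ) - (i : ℤ)) % (f : ℤ) with hx
    have h1 : 0 ≤ x := Int.emod_nonneg _ (by omega)
    have h2 : x < f := Int.emod_lt_of_pos _ hfZ
    refine ⟨x.toNat, by omega, ?_⟩
    have h3 : ((x.toNat : ℤ) + (i : ℤ)) % f = (j₀ : ℤ) % f := by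
      rw [Int.toNat_of_nonneg h1, hx, Int.emod_add_emod,
        show (j₀ : ℤ) - (i : ℤ) + (i : ℤ) = (j₀ : ℤ) by ring]
    rw [dig_emod_eq h3]
    have h4 : dig p f ℓ (j₀ : ℤ) + 2 ≤ p := by omega
    have h5 : ((dig p f ℓ (j₀ : ℤ) : ℕ) : ℤ) + 2 ≤ (p : ℤ) := by exact_mod_cast h4
    linarith
  have haW : ∀ i : ℕ, ∃ js : ℕ, js < f ∧ (a ((js : ℤ) + (i : ℤ)) : ℤ) ≤ (p : ℤ) - 1 := by
    intro i
    obtain ⟨j₀, hj₀⟩ := hnp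
    have hfZ : (0 : ℤ) < (f : ℤ) := by exact_mod_cast hf0
    set x : ℤ := (j₀ - (i : ℤ)) % (f : ℤ) with hx
    have h1 : 0 ≤ x := Int.emod_nonneg _ (by omega)
    have h2 : x < f := Int.emod_lt_of_pos _ hfZ
    refine ⟨x.toNat, by omega, ?_⟩
    have h3 : ((x.toNat : ℤ) + (i : ℤ)) % f = j₀ % f := by
      rw [Int.toNat_of_nonneg h1, hx, Int.emod_add_emod,
        show j₀ - (i : ℤ) + (i : ℤ) = j₀ by ring]
    rw [haE _ _ h3]
    have h4 := (hbd j₀).2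
    have h5 : a j₀ + 1 ≤ p := by omega
    have h6 : ((a j₀ : ℕ) : ℤ) + 1 ≤ (p : ℤ) := by exact_mod_cast h5
    linarith
  have hLnn : ∀ i : ℕ, 0 ≤ Lg i := by
    intro i; rw [hLg]; unfold gsum
    exact Finset.sum_nonneg fun j _ => by positivity
  have hLub : ∀ i : ℕ, Lg i ≤ (p : ℤ) ^ f - 2 := by
    intro i
    obtain ⟨js, hjsf, hjs⟩ := hdigW i
    have hsum : (p : ℤ) ^ js ≤ ∑ j ∈ Finset.range f,
        (((p : ℤ) - 1) - (dig p f ℓ ((j : ℤ) + (i : ℤ)) : ℤ)) * (p : ℤ) ^ j := by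
      have h1 : ∀ j ∈ Finset.range f,
          (0 : ℤ) ≤ (((p : ℤ) - 1) - (dig p f ℓ ((j : ℤ) + (i : ℤ)) : ℤ)) * (p : ℤ) ^ j :=
        fun j _ => mul_nonneg (by linarith [hdig_le ((j : ℤ) + (i : ℤ))]) (by positivity)
      have h2 := Finset.single_le_sum h1 (Finset.mem_range.2 hjsf)
      have h3 : (p : ℤ) ^ js
          ≤ (((p : ℤ) - 1) - (dig p f ℓ ((js : ℤ) + (i : ℤ)) : ℤ)) * (p : ℤ) ^ js := by
        nlinarith [pow_pos (show (0 : ℤ) < p by linarith) js]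
      linarith
    have hsplit2 : ∑ j ∈ Finset.range f,
        (((p : ℤ) - 1) - (dig p f ℓ ((j : ℤ) + (i : ℤ)) : ℤ)) * (p : ℤ) ^ j
          = ((p : ℤ) ^ f - 1) - Lg i := by
      have h1 : ∑ j ∈ Finset.range f,
          (((p : ℤ) - 1) - (dig p f ℓ ((j : ℤ) + (i : ℤ)) : ℤ)) * (p : ℤ) ^ j
            = ((p : ℤ) - 1) * (∑ j ∈ Finset.range f, (p : ℤ) ^ j) - Lg i := by
        rw [Finset.mul_sum, hLg]; unfold gsum; rw [← Finset.sum_sub_distrib]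
        exact Finset.sum_congr rfl fun j _ => by ring
      rw [h1]; linear_combination hgeomf
    rw [hsplit2] at hsum
    have hpj : (1 : ℤ) ≤ (p : ℤ) ^ js := one_le_pow₀ (by linarith)
    linarith
  have hAlb : ∀ i : ℕ, (∑ j ∈ Finset.range f, (p : ℤ) ^ j) ≤ Ag i := by
    intro i
    rw [hAg]; unfold gsum
    apply Finset.sum_le_sum
    intro j _
    have h1 := (hbd ((j : ℤ) + (i : ℤ))).1
    have h2 : (1 : ℤ) ≤ (a ((j : ℤ) + (i : ℤ)) : ℤ) := by exact_mod_cast h1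
    nlinarith [pow_pos (show (0 : ℤ) < p by linarith) j]
  have hAub : ∀ i : ℕ,
      Ag i ≤ ((p : ℤ) ^ f - 1) + (∑ j ∈ Finset.range f, (p : ℤ) ^ j) - 1 := by
    intro i
    obtain ⟨js, hjsf, hjs⟩ := haW i
    have hsum : (p : ℤ) ^ js ≤ ∑ j ∈ Finset.range f,
        ((p : ℤ) - (a ((j : ℤ) + (i : ℤ)) : ℤ)) * (p : ℤ) ^ j := by
      have h1 : ∀ j ∈ Finset.range f,
          (0 : ℤ) ≤ ((p : ℤ) - (a ((j : ℤ) + (i : ℤ)) : ℤ)) * (p : ℤ) ^ j := by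
        intro j _
        have h2 := (hbd ((j : ℤ) + (i : ℤ))).2
        have h3 : ((a ((j : ℤ) + (i : ℤ)) : ℕ) : ℤ) ≤ (p : ℤ) := by exact_mod_cast h2
        exact mul_nonneg (by linarith) (by positivity)
      have h2 := Finset.single_le_sum h1 (Finset.mem_range.2 hjsf)
      have h3 : (p : ℤ) ^ js
          ≤ ((p : ℤ) - (a ((js : ℤ) + (i : ℤ)) : ℤ)) * (p : ℤ) ^ js := by
        nlinarith [pow_pos (show (0 : ℤ) < p by linarith) js]
      linarith
    have hsplit2 : ∑ j ∈ Finset.range f,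
        ((p : ℤ) - (a ((j : ℤ) + (i : ℤ)) : ℤ)) * (p : ℤ) ^ j
          = (p : ℤ) * (∑ j ∈ Finset.range f, (p : ℤ) ^ j) - Ag i := by
      rw [Finset.mul_sum, hAg]; unfold gsum; rw [← Finset.sum_sub_distrib]
      exact Finset.sum_congr rfl fun j _ => by ring
    have hpj : (1 : ℤ) ≤ (p : ℤ) ^ js := one_le_pow₀ (by linarith)
    rw [hsplit2] at hsum
    linarith [hgeomf]
  have hEiff : ∀ i : ℕ,
      (Eprop p f ℓ (i : ℤ) ↔ ((p : ℤ) ^ f - 1) - (∑ j ∈ Finset.range f, (p : ℤ) ^ j) < Lg i) := by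
    intro i
    have hDL := DL hp3 hf (fun j : ℕ => dig p f ℓ ((j : ℤ) + (i : ℤ)))
      (fun j _ => by
        show dig p f ℓ ((j : ℤ) + (i : ℤ)) ≤ p - 1
        have := dig_lt (show 0 < p by omega) f ℓ ((j : ℤ) + (i : ℤ)); omega)
    have hgs : Lg i = ∑ j ∈ Finset.range f, (dig p f ℓ ((j : ℤ) + (i : ℤ)) : ℤ) * (p : ℤ) ^ j := by
      rw [hLg]; rfl
    rw [eprop_iff p f ℓ hp3 hf (i : ℤ), hgs]
    exact hDL.symm
  have hkey : ∀ i : ℕ, Lg i + Ag i = (sigma p f ℓ (i : ℤ) : ℤ) * ((p : ℤ) ^ f - 1) := by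
    intro i
    have h1 := IL hξpos hC1 hCξ (hLnn i) (by linarith [hLub i]) (hAlb i) (hAub i) (hdvdLA i)
    by_cases hE : Eprop p f ℓ (i : ℤ)
    · rw [if_pos ((hEiff i).1 hE)] at h1
      rw [h1]
      have h2 : sigma p f ℓ (i : ℤ) = 2 := by unfold sigma; rw [if_pos hE]
      rw [h2]; norm_num
    · rw [if_neg (fun hlt => hE ((hEiff i).2 hlt))] at h1
      rw [h1]
      have h2 : sigma p f ℓ (i : ℤ) = 1 := by unfold sigma; rw [if_neg hE]
      rw [h2]; norm_num
  have hEe : ∀ i : ℕ,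
      (lbr p f ℓ i : ℤ) - (sigma p f ℓ (i : ℤ) : ℤ) * (p : ℤ) ^ i * ((p : ℤ) ^ f - 1)
        = - ∑ j ∈ Finset.Ico i (i + f), (a (j : ℤ) : ℤ) * (p : ℤ) ^ j := by
    intro i
    rw [hlbr i, hIco_a i]
    linear_combination ((p : ℤ) ^ i) * hkey i
  refine ⟨?_, hEe⟩
  intro i1 i2 h12 h2f
  have hsig : ∀ i : ℕ, sigma p f ℓ ((i + f : ℕ) : ℤ) = sigma p f ℓ (i : ℤ) := by
    intro i
    have h0 : ((i + f : ℕ) : ℤ) = (i : ℤ) + (f : ℤ) := by push_cast; ring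
    rw [h0]; unfold sigma
    by_cases hE : Eprop p f ℓ (i : ℤ)
    · rw [if_pos ((eprop_shift p f ℓ (i : ℤ)).2 hE), if_pos hE]
    · rw [if_neg (fun h => hE ((eprop_shift p f ℓ (i : ℤ)).1 h)), if_neg hE]
  have hstep2 : ∀ i : ℕ, (sigma p f ℓ (((i + 1 : ℕ)) : ℤ) : ℤ) * (p : ℤ) ^ (i + 1) * ((p : ℤ) ^ f - 1)
      = (sigma p f ℓ (i : ℤ) : ℤ) * (p : ℤ) ^ i * ((p : ℤ) ^ f - 1)
        + ((dig p f ℓ (i : ℤ) : ℤ) + (a (i : ℤ) : ℤ)) * (p : ℤ) ^ i * ((p : ℤ) ^ f - 1) := by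
    intro i
    have e1 := hkey i
    have e2 := hkey (i + 1)
    have s1 := hLstep i
    have s2 := hAstep i
    linear_combination (-(p : ℤ) ^ (i + 1)) * e2 + s1 + s2 + ((p : ℤ) ^ i) * e1
  have hFs : ∀ (x n : ℕ),
      (sigma p f ℓ ((x + n : ℕ) : ℤ) : ℤ) * (p : ℤ) ^ (x + n) * ((p : ℤ) ^ f - 1)
        = (sigma p f ℓ (x : ℤ) : ℤ) * (p : ℤ) ^ x * ((p : ℤ) ^ f - 1)
          + (∑ j ∈ Finset.Ico x (x + n),
              ((dig p f ℓ (j : ℤ) : ℤ) + (a (j : ℤ) : ℤ)) * (p : ℤ) ^ j) * ((p : ℤ) ^ f - 1) := by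
    intro x n
    induction n with
    | zero => simp
    | succ n ih =>
        rw [show x + (n + 1) = (x + n) + 1 from by omega]
        rw [Finset.sum_Ico_succ_top (Nat.le_add_right x n)]
        have h1 := hstep2 (x + n)
        linear_combination h1 + ih
  have hξne : ((p : ℤ) ^ f - 1) ≠ 0 := by linarith
  have hF : ∀ x y : ℕ, x ≤ y →
      (∑ j ∈ Finset.Ico x y, ((dig p f ℓ (j : ℤ) : ℤ) + (a (j : ℤ) : ℤ)) * (p : ℤ) ^ j)
        = (sigma p f ℓ (y : ℤ) : ℤ) * (p : ℤ) ^ y - (sigma p f ℓ (x : ℤ) : ℤ) * (p : ℤ) ^ x := by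
    intro x y hxy
    obtain ⟨n, rfl⟩ := Nat.exists_eq_add_of_le hxy
    have h1 := hFs x n
    apply mul_right_cancel₀ hξne
    linear_combination -h1
  have e1 := hF i1 i2 (Nat.le_of_lt h12)
  have e2 := hF i2 (i1 + f) (by omega)
  have hsf := hsig i1
  have s1 : ∑ j ∈ Finset.Ico i1 i2, ((dig p f ℓ (j : ℤ) : ℤ) + (a (j : ℤ) : ℤ)) * (p : ℤ) ^ j
      = (∑ j ∈ Finset.Ico i1 i2, (dig p f ℓ (j : ℤ) : ℤ) * (p : ℤ) ^ j)
        + (∑ j ∈ Finset.Ico i1 i2, (a (j : ℤ) : ℤ) * (p : ℤ) ^ j) := by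
    rw [← Finset.sum_add_distrib]; exact Finset.sum_congr rfl fun j _ => by ring
  have s2 : ∑ j ∈ Finset.Ico i2 (i1 + f),
        ((dig p f ℓ (j : ℤ) : ℤ) + (a (j : ℤ) : ℤ)) * (p : ℤ) ^ j
      = (∑ j ∈ Finset.Ico i2 (i1 + f), (dig p f ℓ (j : ℤ) : ℤ) * (p : ℤ) ^ j)
        + (∑ j ∈ Finset.Ico i2 (i1 + f), (a (j : ℤ) : ℤ) * (p : ℤ) ^ j) := by
    rw [← Finset.sum_add_distrib]; exact Finset.sum_congr rfl fun j _ => by ring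
  rw [s1] at e1
  rw [s2] at e2
  have hpa : (p : ℤ) ^ (i1 + f) = (p : ℤ) ^ i1 * (p : ℤ) ^ f := pow_add _ _ _
  rw [hsf, hpa] at e2
  rw [Int.modEq_iff_dvd]
  exact ⟨(sigma p f ℓ (i1 : ℤ) : ℤ) * (p : ℤ) ^ i1, by linear_combination e2 - e1⟩
end
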